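/- Let K be a differential ring with derivation D, fix a_1 ∈ K, and let ∇ : K → K be the map ∇(y) = D(y) + a_1*y. For every u ∈ K, every natural number m, and every y ∈ K, the m-th iterate of the operator y ↦ ∇(y) + u*y applied to y equals Σ_{j=0}^{m} C(m,j) * Q_{m−j}(u) * ∇^j(y), where C(m,j) denotes the binomial coefficient and ∇^j is the j-th iterate of ∇. -/

import Mathlib

/-- Covariant Bell polynomials relative to `c`:
`Q 0 = 1`, `Q (m+1) = Δ_c (Q m) + u * Q m` where `Δ_c b = D b + c*b - b*c`. -/
def qBell {K : Type*} [Ring K] (D : K → K) (c u : K) : ℕ → K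
  | 0 => 1
  | m + 1 =>
      (D (qBell D c u m) + c * qBell D c u m - qBell D c u m * c)
        + u * qBell D c u m

/-
In the ring `End(K)` of additive maps, write `∇` for `y ↦ D y + a₁ y` and `Q k` for left
multiplication by `Q_k(u)`. The Leibniz rule gives the commutation relation
`(∇ + u) * Q k = Q (k + 1) + Q k * ∇`: moving `∇ + u` past `Q k` either raises the index of `Q`
or leaves `∇` on the right. Starting from `Q 0 = 1`, this relation alone expands `(∇ + u)^m`
binomially, by the Pascal-rule induction of the binomial theorem.
-/

open Finset

theorem pow_eq_sum_choose_mul_mul_pow {R : Type*} [Semiring R] (T N : R) (Q : ℕ → R)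
    (hQ : Q 0 = 1) (hTQ : ∀ k, T * Q k = Q (k + 1) + Q k * N) (m : ℕ) :
    T ^ m = ∑ j ∈ range (m + 1), (m.choose j : R) * Q (m - j) * N ^ j := by
  induction m with
  | zero => simp [hQ]
  | succ m ih =>
    have hterm : ∀ j ∈ range (m + 1), T * ((m.choose j : R) * Q (m - j) * N ^ j)
        = (m.choose j : R) * (Q (m + 1 - j) * N ^ j)
          + (m.choose j : R) * (Q (m - j) * N ^ (j + 1)) := by
      intro j hj
      have hjm : j ≤ m := Nat.lt_succ_iff.mp (mem_range.mp hj)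
      rw [← mul_assoc, ← mul_assoc, ((Nat.cast_commute _ T).symm).eq, mul_assoc _ T, hTQ,
        Nat.sub_add_comm hjm, pow_succ']
      noncomm_ring
    calc T ^ (m + 1) = T * T ^ m := pow_succ' T m
      _ = ∑ j ∈ range (m + 1), ((m.choose j : R) * (Q (m + 1 - j) * N ^ j)
            + (m.choose j : R) * (Q (m - j) * N ^ (j + 1))) := by
        rw [ih, mul_sum, sum_congr rfl hterm]
      _ = ∑ j ∈ range (m + 2), ((m + 1).choose j : R) * (Q (m + 1 - j) * N ^ j) := by
        rw [sum_add_distrib, sum_choose_succ_mul (fun j k => Q k * N ^ j)]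
      _ = _ := sum_congr rfl fun j _ => (mul_assoc _ _ _).symm

theorem nabla_shift_qBell_mul {K : Type*} [Ring K] (D : K → K)
    (hmul : ∀ a b : K, D (a * b) = D a * b + a * D b) (a1 u : K) (k : ℕ) (x : K) :
    (D (qBell D a1 u k * x) + a1 * (qBell D a1 u k * x)) + u * (qBell D a1 u k * x)
      = qBell D a1 u (k + 1) * x + qBell D a1 u k * (D x + a1 * x) := by
  rw [hmul, qBell]
  noncomm_ring

/-- normal ordering of `(∇ + u)^m` with `∇ y = D y + a₁ * y`. -/
theorem nabla_shifted_normal_order {K : Type*} [Ring K] (D : K → K)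
    (hadd : ∀ a b : K, D (a + b) = D a + D b)
    (hmul : ∀ a b : K, D (a * b) = D a * b + a * D b)
    (a1 : K) (u : K) (m : ℕ) (y : K) :
    (fun z => (D z + a1 * z) + u * z)^[m] y
      = ∑ j ∈ Finset.range (m + 1),
          (m.choose j : K) * qBell D a1 u (m - j)
            * (fun z => D z + a1 * z)^[j] y := by
  let L : K → AddMonoid.End K := AddMonoidHom.mulLeft
  let Dh : AddMonoid.End K := AddMonoidHom.mk' D hadd
  let nabla : AddMonoid.End K := Dh + L a1
  let Q : ℕ → AddMonoid.End K := fun k => L (qBell D a1 u k)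
  have hQ : Q 0 = 1 := AddMonoidHom.ext fun x => one_mul x
  have hTQ : ∀ k, (nabla + L u) * Q k = Q (k + 1) + Q k * nabla :=
    fun k => AddMonoidHom.ext (nabla_shift_qBell_mul D hmul a1 u k)
  have hT : ∀ n, ⇑((nabla + L u) ^ n) = (fun z => (D z + a1 * z) + u * z)^[n] :=
    AddMonoid.End.coe_pow K (nabla + L u)
  have hnabla : ∀ n, ⇑(nabla ^ n) = (fun z => D z + a1 * z)^[n] := AddMonoid.End.coe_pow K nabla
  rw [← hT, pow_eq_sum_choose_mul_mul_pow _ _ Q hQ hTQ m]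
  refine (AddMonoidHom.finsetSum_apply _ _ y).trans (sum_congr rfl fun j _ => ?_)
  rw [← hnabla, mul_assoc, mul_assoc, ← nsmul_eq_mul, ← nsmul_eq_mul]
  rfl
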